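/- Let N ⊴ B₃ with N ≤ PB₃ of finite index, and let (m,f) ∈ ℤ × F₂ satisfy the two hexagon relations modulo N. Then f·θ(f) ∈ N, where θ is the automorphism of F₂ swapping the two generators x and y (i.e. f(x,y)f(y,x) ∈ N). -/

import Mathlib

def braidRel : Set (FreeGroup (Fin 2)) :=
  {FreeGroup.of 0 * FreeGroup.of 1 * FreeGroup.of 0 *
    (FreeGroup.of 1 * FreeGroup.of 0 * FreeGroup.of 1)⁻¹}

/-- The Artin braid group on 3 strands. -/
abbrev B3 := PresentedGroup braidRel

def σ₁ : B3 := PresentedGroup.of 0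
def σ₂ : B3 := PresentedGroup.of 1

/-- The standard projection B₃ → S₃. -/
def ρ : B3 →* Equiv.Perm (Fin 3) :=
  PresentedGroup.toGroup (f := ![Equiv.swap 0 1, Equiv.swap 1 2]) (by
    intro r hr
    simp only [braidRel, Set.mem_singleton_iff] at hr
    subst hr
    simp only [map_mul, map_inv, FreeGroup.lift_apply_of]
    decide)

/-- The pure braid group on 3 strands. -/
def PB3 : Subgroup B3 := ρ.ker

def c : B3 := (σ₁ * σ₂ * σ₁) ^ 2

abbrev F2 := FreeGroup (Fin 2)
def xx : F2 := FreeGroup.of 0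
def yy : F2 := FreeGroup.of 1

/-- The identification of F₂ with ⟨σ₁², σ₂²⟩ ≤ PB₃. -/
def ι : F2 →* B3 := FreeGroup.lift ![σ₁ ^ 2, σ₂ ^ 2]

/-- The pair (m, f) satisfies the two hexagon relations modulo N. -/
def Hex (N : Subgroup B3) [N.Normal] (m : ℤ) (f : F2) : Prop :=
  QuotientGroup.mk' N (σ₁ ^ (2 * m + 1) * (ι f)⁻¹ * σ₂ ^ (2 * m + 1) * ι f) =
      QuotientGroup.mk' N ((ι f)⁻¹ * σ₁ * σ₂ * (σ₁ ^ 2) ^ (-m) * c ^ m) ∧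
  QuotientGroup.mk' N ((ι f)⁻¹ * σ₂ ^ (2 * m + 1) * ι f * σ₁ ^ (2 * m + 1)) =
      QuotientGroup.mk' N (σ₂ * σ₁ * (σ₂ ^ 2) ^ (-m) * c ^ m * ι f)

/-- N_ord: the lcm of the orders of x₁₂N, x₂₃N and cN in B₃/N. -/
noncomputable def Nord (N : Subgroup B3) [N.Normal] : ℕ :=
  Nat.lcm
    (Nat.lcm (orderOf (QuotientGroup.mk' N (σ₁ ^ 2)))
      (orderOf (QuotientGroup.mk' N (σ₂ ^ 2))))
    (orderOf (QuotientGroup.mk' N c))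

/-- The endomorphism E_{m,f} of F₂. -/
def Emap (m : ℤ) (f : F2) : F2 →* F2 :=
  FreeGroup.lift ![xx ^ (2 * m + 1), f⁻¹ * yy ^ (2 * m + 1) * f]

/-- [m, f] is a GT-shadow with target N and kernel (source) K. -/
def IsShadow (K N : Subgroup B3) [N.Normal] (m : ℤ) (f : F2) : Prop :=
  Hex N m f ∧
  (∃ g ∈ commutator F2, g⁻¹ * f ∈ N.comap ι) ∧
  IsUnit ((2 * m + 1 : ℤ) : ZMod (Nord N)) ∧
  ∃ T : B3 →* B3 ⧸ N,
    T σ₁ = QuotientGroup.mk' N (σ₁ ^ (2 * m + 1)) ∧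
    T σ₂ = QuotientGroup.mk' N ((ι f)⁻¹ * σ₂ ^ (2 * m + 1) * ι f) ∧
    Function.Surjective T ∧
    T.ker = K

/-- [m, f] is a GT-shadow with target N (with unspecified source). -/
def IsShadowTgt (N : Subgroup B3) [N.Normal] (m : ℤ) (f : F2) : Prop :=
  ∃ K : Subgroup B3, IsShadow K N m f

/-- The swap automorphism θ of F₂. -/
def θ : F2 →* F2 := FreeGroup.lift ![yy, xx]

/-!
Work in `B₃/N` with `Δ = σ₁σ₂σ₁`: the braid relation gives `Δσ₁ = σ₂Δ` and `Δσ₂ = σ₁Δ`, so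
`c = Δ²` is central and `σ₁σ₂x^{-m} = Δσ₁^{-(2m+1)}`. Solving the first hexagon relation for
`f⁻¹σ₂^{2m+1}f`, substituting into the second and cancelling the central `c^m` leaves
`f⁻¹Δ = Δf` modulo `N`. Since `θ` is conjugation by `Δ` on `⟨σ₁², σ₂²⟩`, this is `f·θ(f) ∈ N`.
-/

section BraidRelation

variable {G : Type*} [Group G] {s t : G}

theorem semiconjBy_braid_left (h : s * t * s = t * s * t) : SemiconjBy (s * t * s) s t := by
  simp only [SemiconjBy]
  conv_lhs => rw [h]
  group

theorem semiconjBy_braid_right (h : s * t * s = t * s * t) : SemiconjBy (s * t * s) t s := by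
  simp only [SemiconjBy]
  conv_rhs => rw [h]
  group

theorem commute_braid_sq_left (h : s * t * s = t * s * t) : Commute ((s * t * s) ^ 2) s := by
  rw [sq]
  exact (semiconjBy_braid_right h).mul_left (semiconjBy_braid_left h)

theorem commute_braid_sq_right (h : s * t * s = t * s * t) : Commute ((s * t * s) ^ 2) t := by
  rw [sq]
  exact (semiconjBy_braid_left h).mul_left (semiconjBy_braid_right h)

theorem conj_eq_inv_of_hexagon {a : G} {m : ℤ} (h : s * t * s = t * s * t)
    (ha : Commute ((s * t * s) ^ 2) a)
    (h₁ : s ^ (2 * m + 1) * a⁻¹ * t ^ (2 * m + 1) * a =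
      a⁻¹ * s * t * (s ^ 2) ^ (-m) * ((s * t * s) ^ 2) ^ m)
    (h₂ : a⁻¹ * t ^ (2 * m + 1) * a * s ^ (2 * m + 1) =
      t * s * (t ^ 2) ^ (-m) * ((s * t * s) ^ 2) ^ m * a) :
    s * t * s * a * (s * t * s)⁻¹ = a⁻¹ := by
  have h₁' : s ^ (2 * m + 1) * a⁻¹ * t ^ (2 * m + 1) * a =
      a⁻¹ * (s * t * s) * (s ^ (2 * m + 1))⁻¹ * ((s * t * s) ^ 2) ^ m := by
    rw [h₁]; group
  have h₂' : a⁻¹ * t ^ (2 * m + 1) * a * s ^ (2 * m + 1) =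
      s * t * s * (t ^ (2 * m + 1))⁻¹ * ((s * t * s) ^ 2) ^ m * a := by
    rw [h₂, h]; group
  set Δ := s * t * s
  set P := s ^ (2 * m + 1)
  set Q := t ^ (2 * m + 1)
  set z := (Δ ^ 2) ^ m
  have hzP : z * P = P * z := ((commute_braid_sq_left h).zpow_zpow m (2 * m + 1)).eq
  have hza : z * a = a * z := (ha.zpow_left m).eq
  have hQP : Δ * Q⁻¹ = P⁻¹ * Δ :=
    ((semiconjBy_braid_right h).zpow_right (2 * m + 1)).inv_right.eq
  have key : P⁻¹ * a⁻¹ * Δ * z = P⁻¹ * Δ * a * z :=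
    calc P⁻¹ * a⁻¹ * Δ * z = P⁻¹ * (a⁻¹ * Δ * P⁻¹ * z) * P := by
          simp only [mul_assoc, hzP]; group
      _ = P⁻¹ * (P * a⁻¹ * Q * a) * P := by rw [h₁']
      _ = a⁻¹ * Q * a * P := by group
      _ = Δ * Q⁻¹ * z * a := h₂'
      _ = P⁻¹ * Δ * a * z := by rw [mul_assoc _ z a, hza, hQP]; group
  have hΔa : a⁻¹ * Δ = Δ * a := by
    simpa only [mul_assoc, mul_right_inj] using mul_right_cancel key
  rw [← hΔa]; group

end BraidRelation

theorem σ₁_mul_σ₂_mul_σ₁ : σ₁ * σ₂ * σ₁ = σ₂ * σ₁ * σ₂ :=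
  PresentedGroup.mk_eq_mk_of_mul_inv_mem (rels := braidRel) rfl

theorem commute_c (g : B3) : Commute c g := by
  have hgen : ∀ i, PresentedGroup.of i ∈ Subgroup.centralizer {c} := by
    intro i
    rw [Subgroup.mem_centralizer_singleton_iff]
    fin_cases i
    · exact (commute_braid_sq_left σ₁_mul_σ₂_mul_σ₁).eq.symm
    · exact (commute_braid_sq_right σ₁_mul_σ₂_mul_σ₁).eq.symm
  exact (Subgroup.mem_centralizer_singleton_iff.mp (PresentedGroup.generated_by _ _ hgen g)).symm

theorem ι_θ (f : F2) : ι (θ f) = σ₁ * σ₂ * σ₁ * ι f * (σ₁ * σ₂ * σ₁)⁻¹ := by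
  have hσ₁ := (semiconjBy_braid_left σ₁_mul_σ₂_mul_σ₁).pow_right 2
  have hσ₂ := (semiconjBy_braid_right σ₁_mul_σ₂_mul_σ₁).pow_right 2
  have : ι.comp θ = (MulAut.conj (σ₁ * σ₂ * σ₁)).toMonoidHom.comp ι := by
    refine FreeGroup.ext_hom _ _ (Fin.forall_fin_two.mpr ⟨?_, ?_⟩)
    all_goals simp only [MonoidHom.comp_apply, θ, ι, xx, yy, FreeGroup.lift_apply_of,
      Matrix.cons_val_zero, Matrix.cons_val_one, MulEquiv.coe_toMonoidHom, MulAut.conj_apply]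
    · exact eq_mul_inv_iff_mul_eq.mpr hσ₁.eq.symm
    · exact eq_mul_inv_iff_mul_eq.mpr hσ₂.eq.symm
  exact DFunLike.congr_fun this f

theorem f_theta_f_mem_general (N : Subgroup B3) [N.Normal] (m : ℤ) (f : F2) (hhex : Hex N m f) :
    ι f * ι (θ f) ∈ N := by
  let π := QuotientGroup.mk' N
  obtain ⟨h₁, h₂⟩ := hhex
  simp only [c, map_mul, map_inv, map_zpow, map_pow] at h₁ h₂
  have hbraid : π σ₁ * π σ₂ * π σ₁ = π σ₂ * π σ₁ * π σ₂ := by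
    simpa only [map_mul] using congrArg π σ₁_mul_σ₂_mul_σ₁
  have hcentral : Commute ((π σ₁ * π σ₂ * π σ₁) ^ 2) (π (ι f)) := by
    simpa only [c, map_mul, map_pow] using (commute_c (ι f)).map π
  have hconj := conj_eq_inv_of_hexagon hbraid hcentral h₁ h₂
  rw [← QuotientGroup.ker_mk' N, MonoidHom.mem_ker, ι_θ]
  simp only [map_mul, map_inv]
  rw [hconj, mul_inv_cancel]

/-- If (m,f) satisfies the hexagon relations modulo N then f·θ(f) ∈ N. -/
theorem f_theta_f_mem (N : Subgroup B3) [N.Normal] (hfin : N.FiniteIndex)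
    (hle : N ≤ PB3) (m : ℤ) (f : F2) (hhex : Hex N m f) :
    ι f * ι (θ f) ∈ N :=
  f_theta_f_mem_general N m f hhex
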